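/- arXiv:1006.5545 — 2 statements merged into one kernel-verified Lean document; each statement's English description precedes it below -/
import Mathlib

section
/- If Z is a Poisson random variable with mean λ > 0, then the total variation distance between the distributions of Z and Z+1 satisfies d_TV(Z, Z+1) ≤ 1/√(2eλ). -/
/-!
Up to the mode `m = ⌊λ⌋` the Poisson probabilities increase and afterwards they decrease, so
`P(Z = k) - P(Z + 1 = k)` is nonnegative exactly on `{0, …, m}`. Hence the supremum defining
`d_TV(Z, Z + 1)` is attained at that set and equals `P(Z ≤ m) - P(Z < m) = P(Z = m)`.
Any Poisson probability is at most `1 / √(2eλ)`: maximising over `λ` gives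
`λ^(k+1/2) e^(-λ) ≤ (k+1/2)^(k+1/2) e^(-(k+1/2))`, and the Stirling-type bound
`k! ≥ √2 (k+1/2)^(k+1/2) e^(-k)` follows by induction from
`(1 + x) log (1 + x) - (1 - x) log (1 - x) ≤ 2x`, a consequence of `log y ≤ sinh (log y)`.
-/

open MeasureTheory ProbabilityTheory

/-- Total variation distance between two distributions on ℤ₊. -/
noncomputable def dTV (μ ν : Measure ℕ) : ℝ :=
  ⨆ A : Set ℕ, |(μ A).toReal - (ν A).toReal|

open Real
open scoped NNReal Nat

section SignChange

variable {α : Type*} [MeasurableSpace α] [Countable α] [MeasurableSingletonClass α]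
  {μ ν : Measure α} [IsFiniteMeasure μ] [IsFiniteMeasure ν]

theorem measureReal_le_measureReal_of_forall_singleton {B : Set α}
    (h : ∀ k ∈ B, ν.real {k} ≤ μ.real {k}) : ν.real B ≤ μ.real B := by
  refine ENNReal.toReal_mono (measure_ne_top _ _) ?_
  rw [← Measure.tsum_indicator_apply_singleton μ B .of_discrete,
    ← Measure.tsum_indicator_apply_singleton ν B .of_discrete]
  refine ENNReal.tsum_le_tsum fun k => Set.indicator_le_indicator' fun hk => ?_
  exact (ENNReal.toReal_le_toReal (measure_ne_top _ _) (measure_ne_top _ _)).1 (h k hk)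

theorem measureReal_sub_le_of_forall_singleton {S : Set α}
    (hS : ∀ k ∈ S, ν.real {k} ≤ μ.real {k}) (hSc : ∀ k ∉ S, μ.real {k} ≤ ν.real {k})
    (A : Set α) : μ.real A - ν.real A ≤ μ.real S - ν.real S := by
  have hAS : μ.real (A \ S) ≤ ν.real (A \ S) :=
    measureReal_le_measureReal_of_forall_singleton fun k hk => hSc k hk.2
  have hSA : ν.real (S \ A) ≤ μ.real (S \ A) :=
    measureReal_le_measureReal_of_forall_singleton fun k hk => hS k hk.1
  have hμA := measureReal_inter_add_sdiff (μ := μ) (s := A) (.of_discrete : MeasurableSet S)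
  have hνA := measureReal_inter_add_sdiff (μ := ν) (s := A) (.of_discrete : MeasurableSet S)
  have hμS := measureReal_inter_add_sdiff (μ := μ) (s := S) (.of_discrete : MeasurableSet A)
  have hνS := measureReal_inter_add_sdiff (μ := ν) (s := S) (.of_discrete : MeasurableSet A)
  rw [Set.inter_comm] at hμS hνS
  linarith

end SignChange

theorem dTV_le_of_forall_singleton {μ ν : Measure ℕ} [IsProbabilityMeasure μ]
    [IsProbabilityMeasure ν] {S : Set ℕ} (hS : ∀ k ∈ S, ν.real {k} ≤ μ.real {k})
    (hSc : ∀ k ∉ S, μ.real {k} ≤ ν.real {k}) : dTV μ ν ≤ μ.real S - ν.real S := by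
  refine ciSup_le fun A =>
    abs_sub_le_iff.2 ⟨measureReal_sub_le_of_forall_singleton hS hSc A, ?_⟩
  have hcompl := measureReal_sub_le_of_forall_singleton (S := Sᶜ) hSc
    (fun k hk => hS k (not_not.1 hk)) A
  rwa [probReal_compl_eq_one_sub .of_discrete, probReal_compl_eq_one_sub .of_discrete,
    sub_sub_sub_cancel_left] at hcompl

theorem dTV_map_add_one_le (μ : Measure ℕ) [IsProbabilityMeasure μ] (m : ℕ)
    (hup : ∀ k < m, μ.real {k} ≤ μ.real {k + 1})
    (hdown : ∀ k ≥ m, μ.real {k + 1} ≤ μ.real {k}) :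
    dTV μ (μ.map (· + 1)) ≤ μ.real {m} := by
  have hmeas : Measurable (· + 1 : ℕ → ℕ) := measurable_from_top
  have := Measure.isProbabilityMeasure_map (μ := μ) hmeas.aemeasurable
  have hshift : ∀ s, (μ.map (· + 1)).real s = μ.real ((· + 1) ⁻¹' s) := fun s =>
    map_measureReal_apply hmeas .of_discrete
  have hzero : (μ.map (· + 1)).real {0} = 0 := by
    rw [hshift, show (· + 1 : ℕ → ℕ) ⁻¹' {0} = ∅ by ext; simp, measureReal_empty]
  have hsucc : ∀ k, (μ.map (· + 1)).real {k + 1} = μ.real {k} := fun k => by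
    rw [hshift, show (· + 1 : ℕ → ℕ) ⁻¹' {k + 1} = {k} by ext; simp]
  calc dTV μ (μ.map (· + 1)) ≤ μ.real (Set.Iic m) - (μ.map (· + 1)).real (Set.Iic m) := by
        refine dTV_le_of_forall_singleton (fun k hk => ?_) (fun k hk => ?_)
        · rcases k with _ | k
          · simp [hzero]
          · exact hsucc k ▸ hup k hk
        · have hmk : m < k := not_le.1 hk
          obtain ⟨k, rfl⟩ := Nat.exists_eq_add_one.2 (Nat.zero_lt_of_lt hmk)
          exact hsucc k ▸ hdown k (Nat.le_of_lt_succ hmk)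
    _ = μ.real {m} := by
        rw [hshift, show (· + 1 : ℕ → ℕ) ⁻¹' Set.Iic m = Set.Iio m by ext; simp,
          ← Set.Iio_insert, Set.insert_eq, measureReal_union (by simp) .of_discrete,
          add_sub_cancel_right]

theorem log_le_half_sub_inv {y : ℝ} (hy : 1 ≤ y) : log y ≤ (y - y⁻¹) / 2 :=
  (self_le_sinh_iff.2 (log_nonneg hy)).trans_eq (sinh_log (by linarith))

theorem one_add_mul_log_one_add_sub_one_sub_mul_log_one_sub_le {x : ℝ} (hx0 : 0 ≤ x)
    (hx1 : x < 1) : (1 + x) * log (1 + x) - (1 - x) * log (1 - x) ≤ 2 * x := by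
  have hpos : 0 < 1 - x := by linarith
  have hplus : (1 + x) * log (1 + x) ≤ x + x ^ 2 / 2 :=
    calc (1 + x) * log (1 + x) ≤ (1 + x) * (((1 + x) - (1 + x)⁻¹) / 2) := by
          gcongr; exact log_le_half_sub_inv (by linarith)
      _ = x + x ^ 2 / 2 := by field_simp; ring
  have hminus : -((1 - x) * log (1 - x)) ≤ x - x ^ 2 / 2 :=
    calc -((1 - x) * log (1 - x)) = (1 - x) * log (1 - x)⁻¹ := by rw [log_inv]; ring
      _ ≤ (1 - x) * (((1 - x)⁻¹ - (1 - x)⁻¹⁻¹) / 2) := by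
          gcongr; exact log_le_half_sub_inv (one_le_inv_iff₀.2 ⟨hpos, by linarith⟩)
      _ = x - x ^ 2 / 2 := by field_simp; ring
  linarith

theorem rpow_self_add_one_le {c : ℝ} (hc : 0 < c) :
    (c + 1) ^ (c + 1) ≤ exp 1 * (c + 1 / 2) * c ^ c := by
  have hu : 0 < c + 1 / 2 := by positivity
  set x := (2 * c + 1)⁻¹ with hx
  have hx0 : 0 ≤ x := by positivity
  have hx1 : x < 1 := inv_lt_one_of_one_lt₀ (by linarith)
  have hc1 : c + 1 = (c + 1 / 2) * (1 + x) := by rw [hx]; field_simp; ring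
  have hc0 : c = (c + 1 / 2) * (1 - x) := by rw [hx]; field_simp; ring
  have hux : (c + 1 / 2) * (2 * x) = 1 := by rw [hx]; field_simp
  have hexpand : (c + 1) * log (c + 1) - c * log c
      = log (c + 1 / 2) + (c + 1 / 2) * ((1 + x) * log (1 + x) - (1 - x) * log (1 - x)) := by
    have hlog1 : log (c + 1) = log (c + 1 / 2) + log (1 + x) := by
      rw [← log_mul hu.ne' (by linarith), ← hc1]
    have hlog0 : log c = log (c + 1 / 2) + log (1 - x) := by
      rw [← log_mul hu.ne' (by linarith), ← hc0]
    rw [hlog1, hlog0]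
    linear_combination log (1 + x) * hc1 - log (1 - x) * hc0
  have hkey := mul_le_mul_of_nonneg_left
    (one_add_mul_log_one_add_sub_one_sub_mul_log_one_sub_le hx0 hx1) hu.le
  rw [hux] at hkey
  rw [rpow_def_of_pos (by positivity), rpow_def_of_pos hc,
    show exp 1 * (c + 1 / 2) * exp (log c * c) = exp (1 + log (c + 1 / 2) + c * log c) by
      rw [exp_add, exp_add, exp_log hu, mul_comm c]]
  exact exp_le_exp.2 (by linarith)

theorem sqrt_two_mul_rpow_mul_exp_neg_le_factorial (k : ℕ) :
    √2 * ((k : ℝ) + 1 / 2) ^ ((k : ℝ) + 1 / 2) * exp (-k) ≤ k ! := by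
  induction k with
  | zero =>
    rw [Nat.cast_zero, zero_add, ← sqrt_eq_rpow, ← sqrt_mul zero_le_two]
    norm_num
  | succ k ih =>
    set c : ℝ := k + 1 / 2 with hc
    have hk1 : ((k + 1 : ℕ) : ℝ) + 1 / 2 = c + 1 := by push_cast; ring
    have hexp : exp (-((k + 1 : ℕ) : ℝ)) = exp (-k) / exp 1 := by
      rw [← exp_sub]; push_cast; ring_nf
    rw [hk1, hexp]
    calc √2 * (c + 1) ^ (c + 1) * (exp (-k) / exp 1)
        ≤ √2 * (exp 1 * (c + 1 / 2) * c ^ c) * (exp (-k) / exp 1) := by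
          gcongr; exact rpow_self_add_one_le (by positivity)
      _ = (k + 1) * (√2 * c ^ c * exp (-k)) := by rw [hc]; field_simp; ring
      _ ≤ (k + 1) * k ! := by gcongr
      _ = (k + 1)! := by push_cast [Nat.factorial_succ]; ring

theorem rpow_mul_exp_neg_le {c y : ℝ} (hc : 0 < c) (hy : 0 < y) :
    y ^ c * exp (-y) ≤ c ^ c * exp (-c) := by
  rw [rpow_def_of_pos hy, rpow_def_of_pos hc, ← exp_add, ← exp_add]
  have h := mul_le_mul_of_nonneg_left (log_le_sub_one_of_pos (div_pos hy hc)) hc.le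
  rw [log_div hy.ne' hc.ne', mul_sub_one, mul_div_cancel₀ _ hc.ne'] at h
  exact exp_le_exp.2 (by linarith)

theorem poissonMeasure_real_singleton_succ (r : ℝ≥0) (k : ℕ) :
    Po(r).real {k + 1} = Po(r).real {k} * (r / (k + 1)) := by
  simp only [poissonMeasure_real_singleton, Nat.factorial_succ, Nat.cast_mul, pow_succ]
  push_cast
  field_simp

theorem poissonMeasure_real_singleton_le_succ_iff {r : ℝ≥0} (hr : 0 < r) (k : ℕ) :
    Po(r).real {k} ≤ Po(r).real {k + 1} ↔ (k + 1 : ℝ) ≤ r := by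
  rw [poissonMeasure_real_singleton_succ, le_mul_iff_one_le_right
    (poissonMeasure_real_singleton_pos k hr), one_le_div (by positivity)]

theorem poissonMeasure_real_singleton_le {r : ℝ≥0} (hr : 0 < r) (k : ℕ) :
    Po(r).real {k} ≤ 1 / √(2 * exp 1 * r) := by
  have hr' : (0 : ℝ) < r := hr
  rw [le_div_iff₀ (by positivity)]
  have hsqrt : √(2 * exp 1 * r) = √2 * exp (1 / 2) * √r := by
    rw [sqrt_mul (by positivity), sqrt_mul zero_le_two, ← exp_half]
  calc Po(r).real {k} * √(2 * exp 1 * r)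
      = (r ^ ((k : ℝ) + 1 / 2) * exp (-r)) * (√2 * exp (1 / 2)) / k ! := by
        rw [poissonMeasure_real_singleton, hsqrt, rpow_add hr', rpow_natCast, ← sqrt_eq_rpow]
        ring
    _ ≤ (((k : ℝ) + 1 / 2) ^ ((k : ℝ) + 1 / 2) * exp (-((k : ℝ) + 1 / 2)))
          * (√2 * exp (1 / 2)) / k ! := by
        gcongr ?_ * _ / _
        exact rpow_mul_exp_neg_le (by positivity) hr'
    _ = √2 * ((k : ℝ) + 1 / 2) ^ ((k : ℝ) + 1 / 2) * exp (-k) / k ! := by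
        rw [show -((k : ℝ) + 1 / 2) = -k + -(1 / 2) by ring, exp_add, exp_neg (1 / 2)]
        field_simp
    _ ≤ 1 := div_le_one_of_le₀ (sqrt_two_mul_rpow_mul_exp_neg_le_factorial k) (by positivity)

theorem dTV_poissonMeasure_map_add_one_le {r : ℝ≥0} (hr : 0 < r) :
    dTV Po(r) (Po(r).map (· + 1)) ≤ 1 / √(2 * exp 1 * r) := by
  refine (dTV_map_add_one_le Po(r) ⌊(r : ℝ)⌋₊ (fun k hk => ?_) (fun k hk => ?_)).trans
    (poissonMeasure_real_singleton_le hr _)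
  · rw [poissonMeasure_real_singleton_le_succ_iff hr]
    exact_mod_cast (Nat.le_floor_iff r.2).1 hk
  · have hlt : (r : ℝ) < k + 1 := by exact_mod_cast (Nat.floor_lt r.2).1 (Nat.lt_succ_of_le hk)
    exact le_of_not_ge fun h => ((poissonMeasure_real_singleton_le_succ_iff hr k).1 h).not_gt hlt

/-- If Z is Poisson with mean λ > 0, then d_TV(Z, Z+1) ≤ 1/√(2eλ). -/
theorem poisson_shift_dTV_bound
    {Ω : Type*} [MeasurableSpace Ω] (P : Measure Ω) [IsProbabilityMeasure P]
    (lam : ℝ) (hlam : 0 < lam) (Z : Ω → ℕ) (hZ : Measurable Z)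
    (hpois : ∀ k : ℕ, (P (Z ⁻¹' {k})).toReal =
      Real.exp (-lam) * lam ^ k / (Nat.factorial k)) :
    dTV (P.map Z) (P.map (fun ω => Z ω + 1)) ≤
      1 / Real.sqrt (2 * Real.exp 1 * lam) := by
  set r : ℝ≥0 := ⟨lam, hlam.le⟩
  have hlaw : P.map Z = Po(r) := ext_iff_measureReal_singleton.2 fun k => by
    rw [map_measureReal_apply hZ .of_discrete, poissonMeasure_real_singleton]
    exact hpois k
  have hshift : P.map (fun ω => Z ω + 1) = (P.map Z).map (· + 1) :=
    (Measure.map_map measurable_from_top hZ).symm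
  rw [hshift, hlaw]
  exact dTV_poissonMeasure_map_add_one_le (r := r) hlam
end

section
/- If X and Y are independent ℤ₊-valued random variables, then d_TV(X+Y, X+Y+1) ≤ d_TV(X, X+1). -/
/-!
By independence, the law of `X + Y` is the convolution of the laws of `X` and `Y`, and the law of
`X + Y + 1` is the convolution of the laws of `X + 1` and `Y`. Convolving with a probability
measure `ν` turns the signed difference `μ A - μ' A` into its average over the translates
`A - y`, `y ∼ ν`, so it cannot increase the total variation distance.
-/

open MeasureTheory ProbabilityTheory

theorem abs_sub_le_dTV (μ ν : Measure ℕ) [IsFiniteMeasure μ] [IsFiniteMeasure ν] (A : Set ℕ) :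
    |(μ A).toReal - (ν A).toReal| ≤ dTV μ ν := by
  refine le_ciSup (f := fun A => |(μ A).toReal - (ν A).toReal|)
    ⟨μ.real Set.univ + ν.real Set.univ, ?_⟩ A
  rintro _ ⟨B, rfl⟩
  exact abs_sub_le_of_nonneg_of_le measureReal_nonneg
    (measureReal_mono (Set.subset_univ B) |>.trans (le_add_of_nonneg_right measureReal_nonneg))
    measureReal_nonneg
    (measureReal_mono (Set.subset_univ B) |>.trans (le_add_of_nonneg_left measureReal_nonneg))

namespace MeasureTheory.Measure

variable {M : Type*} [AddMonoid M] [MeasurableSpace M] [MeasurableAdd₂ M]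

theorem conv_apply (μ ν : Measure M) [SFinite μ] [SFinite ν] {A : Set M}
    (hA : MeasurableSet A) :
    (μ ∗ ν) A = ∫⁻ y, μ ((· + y) ⁻¹' A) ∂ν := by
  rw [conv, map_apply measurable_add hA, prod_apply_symm (measurable_add hA)]
  rfl

theorem toReal_conv_apply (μ ν : Measure M) [IsFiniteMeasure μ] [SFinite ν] {A : Set M}
    (hA : MeasurableSet A) :
    ((μ ∗ ν) A).toReal = ∫ y, (μ ((· + y) ⁻¹' A)).toReal ∂ν := by
  rw [conv_apply μ ν hA, integral_toReal]
  · exact (measurable_measure_prodMk_right (measurable_add hA)).aemeasurable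
  · exact .of_forall fun _ => measure_lt_top μ _

end MeasureTheory.Measure

theorem dTV_conv_le (μ μ' ν : Measure ℕ) [IsFiniteMeasure μ] [IsFiniteMeasure μ']
    [IsProbabilityMeasure ν] : dTV (μ ∗ ν) (μ' ∗ ν) ≤ dTV μ μ' := by
  refine ciSup_le fun A => ?_
  have integrable_translate (μ : Measure ℕ) [IsFiniteMeasure μ] :
      Integrable (fun y => (μ ((· + y) ⁻¹' A)).toReal) ν := by
    refine .of_bound Measurable.of_discrete.aestronglyMeasurable (μ.real Set.univ)
      (.of_forall fun y => ?_)
    rw [Real.norm_of_nonneg ENNReal.toReal_nonneg]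
    exact measureReal_mono (Set.subset_univ _)
  rw [Measure.toReal_conv_apply μ ν .of_discrete, Measure.toReal_conv_apply μ' ν .of_discrete,
    ← integral_sub (integrable_translate μ) (integrable_translate μ')]
  simpa only [Real.norm_eq_abs, probReal_univ, mul_one] using
    norm_integral_le_of_norm_le_const (μ := ν)
      (f := fun y => (μ ((· + y) ⁻¹' A)).toReal - (μ' ((· + y) ⁻¹' A)).toReal)
      (.of_forall fun y => abs_sub_le_dTV μ μ' ((· + y) ⁻¹' A))

/-- If X and Y are independent ℤ₊-valued random variables, then
d_TV(X+Y, X+Y+1) ≤ d_TV(X, X+1). -/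
theorem dTV_shift_add_indep_le
    {Ω : Type*} [MeasurableSpace Ω] (P : Measure Ω) [IsProbabilityMeasure P]
    (X Y : Ω → ℕ) (hX : Measurable X) (hY : Measurable Y)
    (hindep : IndepFun X Y P) :
    dTV (P.map (fun ω => X ω + Y ω)) (P.map (fun ω => X ω + Y ω + 1)) ≤
      dTV (P.map X) (P.map (fun ω => X ω + 1)) := by
  have law_add : P.map (fun ω => X ω + Y ω) = P.map X ∗ P.map Y :=
    hindep.map_add_eq_map_conv_map hX hY
  have law_add_one : P.map (fun ω => X ω + Y ω + 1) = P.map (fun ω => X ω + 1) ∗ P.map Y := by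
    simp_rw [add_right_comm _ (Y _)]
    exact (hindep.comp (measurable_add_const 1) measurable_id).map_add_eq_map_conv_map
      (hX.add_const 1) hY
  have : IsProbabilityMeasure (P.map Y) := Measure.isProbabilityMeasure_map hY.aemeasurable
  rw [law_add, law_add_one]
  exact dTV_conv_le _ _ _
end
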